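/- Kirkwood's closure need not reproduce the pair marginals it is built from: for the probability distribution p on Fin 2 × Fin 2 × Fin 2 with p(0,0,0) = p(1,1,1) = 1/2 and p = 0 elsewhere, the Kirkwood closure κ of p satisfies ∑_c κ(0,0,c) = 1, whereas p₁₂(0,0) = 1/2, so ∑_c κ(0,0,c) ≠ p₁₂(0,0). -/
import Mathlib


open Finset

/-- The specific distribution on `Fin 2 × Fin 2 × Fin 2` with mass `1/2` at `(0,0,0)` and
`(1,1,1)`. -/
noncomputable def pDiag : Fin 2 × Fin 2 × Fin 2 → ℝ :=
  fun x => if x = (0, 0, 0) ∨ x = (1, 1, 1) then 1 / 2 else 0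

/-- Single marginals. -/
noncomputable def pDiag1 (a : Fin 2) : ℝ := ∑ b : Fin 2, ∑ c : Fin 2, pDiag (a, b, c)
noncomputable def pDiag2 (b : Fin 2) : ℝ := ∑ a : Fin 2, ∑ c : Fin 2, pDiag (a, b, c)
noncomputable def pDiag3 (c : Fin 2) : ℝ := ∑ a : Fin 2, ∑ b : Fin 2, pDiag (a, b, c)

/-- Pair marginals. -/
noncomputable def pDiag12 (a b : Fin 2) : ℝ := ∑ c : Fin 2, pDiag (a, b, c)
noncomputable def pDiag23 (b c : Fin 2) : ℝ := ∑ a : Fin 2, pDiag (a, b, c)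
noncomputable def pDiag13 (a c : Fin 2) : ℝ := ∑ b : Fin 2, pDiag (a, b, c)

/-- Kirkwood's closure of `pDiag`. -/
noncomputable def kirkwoodDiag (a b c : Fin 2) : ℝ :=
  pDiag12 a b * pDiag23 b c * pDiag13 a c / (pDiag1 a * pDiag2 b * pDiag3 c)

/-- Kirkwood's closure need not reproduce the pair marginals it is built from: for the
two-point distribution `pDiag`, one has `∑_c κ(0,0,c) = 1` while `p₁₂(0,0) = 1/2`. -/
theorem kirkwood_wrong_marginal :
    (∑ c : Fin 2, kirkwoodDiag 0 0 c) = 1 ∧ pDiag12 0 0 = 1 / 2 ∧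
      (∑ c : Fin 2, kirkwoodDiag 0 0 c) ≠ pDiag12 0 0 := by
  norm_num [kirkwoodDiag, pDiag12, pDiag23, pDiag13, pDiag1, pDiag2, pDiag3, pDiag, Fin.sum_univ_two, Prod.ext_iff]
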